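/- arXiv:2004.07019 — 3 statements merged into one kernel-verified Lean document; each statement's English description precedes it below -/
import Mathlib

section
/- Over ℝ^n with coordinates x_1,…,x_n of weights 1,…,n, let F be the module of polynomial vector fields preserving the weight filtration on polynomials, i.e. generated by the monomial fields x_1^{i_1}⋯x_n^{i_n} ∂/∂x_k with i_1 + 2i_2 + ⋯ + n·i_n ≥ k. Then x_1^n ∂/∂x_n belongs to F ∩ I^n·𝔛(ℝ^n) but not to I·F, where I is the ideal of polynomials vanishing at 0. -/
open MvPolynomial

namespace ArAux

variable (m : ℕ)

/-- the weight of an exponent -/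
def w (d : Fin (m+1) →₀ ℕ) : ℕ := ∑ j : Fin (m+1), (j.val + 1) * d j

lemma w_add (a b : Fin (m+1) →₀ ℕ) : w m (a + b) = w m a + w m b := by
  simp [w, Finsupp.add_apply, Nat.mul_add, Finset.sum_add_distrib]

lemma w_pos (a : Fin (m+1) →₀ ℕ) (ha : a ≠ 0) : 1 ≤ w m a := by
  by_contra h
  push_neg at h
  apply ha
  have h0 : w m a = 0 := Nat.lt_one_iff.mp h
  ext j
  have := (Finset.sum_eq_zero_iff.mp h0) j (Finset.mem_univ j)
  simpa using this

/-- vector fields whose last coordinate has all monomials of weight ≥ c -/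
noncomputable def Wge (c : ℕ) : Submodule (MvPolynomial (Fin (m+1)) ℝ) (Fin (m+1) → MvPolynomial (Fin (m+1)) ℝ) where
  carrier := {v | ∀ d, w m d < c → coeff d (v (Fin.last m)) = 0}
  zero_mem' := by intro d _; simp
  add_mem' := by
    intro a b ha hb d hd
    simp [MvPolynomial.coeff_add, ha d hd, hb d hd]
  smul_mem' := by
    intro p v hv d hd
    have : (p • v) (Fin.last m) = p * v (Fin.last m) := rfl
    rw [this, MvPolynomial.coeff_mul]
    apply Finset.sum_eq_zero
    intro x hx
    have hxe : x.1 + x.2 = d := Finset.HasAntidiagonal.mem_antidiagonal.mp hx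
    have : w m x.2 ≤ w m d := by
      rw [← hxe, w_add]; omega
    rw [hv x.2 (lt_of_le_of_lt this hd), mul_zero]

lemma w_single : w m (Finsupp.single (0 : Fin (m+1)) (m+1)) = m + 1 := by
  rw [w, Finset.sum_eq_single (0 : Fin (m+1))]
  · simp
  · intro j _ hj; simp [Finsupp.single_apply, Ne.symm hj]
  · simp

end ArAux

namespace ArAux2
open ArAux
variable (m : ℕ)

lemma span_le_Wge :
    Submodule.span (MvPolynomial (Fin (m+1)) ℝ)
      {v : Fin (m+1) → MvPolynomial (Fin (m+1)) ℝ | ∃ (k : Fin (m+1)) (d : Fin (m+1) →₀ ℕ),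
      (k.val + 1) ≤ (∑ j : Fin (m+1), (j.val + 1) * d j) ∧
      v = fun i => if i = k then monomial d (1 : ℝ) else 0} ≤ Wge m (m+1) := by
  rw [Submodule.span_le]
  rintro v ⟨k, d, hkd, rfl⟩
  intro e he
  simp only
  by_cases hk : Fin.last m = k
  · subst hk
    rw [if_pos rfl, MvPolynomial.coeff_monomial]
    have hwd : (m+1) ≤ w m d := by
      simpa [Fin.val_last, w] using hkd
    have : d ≠ e := by
      rintro rfl; omega
    simp [this]
  · simp [hk]

lemma smul_coeff_zero (p : MvPolynomial (Fin (m+1)) ℝ) (v : Fin (m+1) → MvPolynomial (Fin (m+1)) ℝ) (hp : constantCoeff p = 0) (hv : v ∈ Wge m (m+1))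
    (d : Fin (m+1) →₀ ℕ) (hd : w m d ≤ m+1) :
    coeff d ((p • v) (Fin.last m)) = 0 := by
  have : (p • v) (Fin.last m) = p * v (Fin.last m) := rfl
  rw [this, MvPolynomial.coeff_mul]
  apply Finset.sum_eq_zero
  intro x hx
  have hxe : x.1 + x.2 = d := Finset.HasAntidiagonal.mem_antidiagonal.mp hx
  by_cases h1 : x.1 = 0
  · have : coeff x.1 p = 0 := by rw [h1]; exact hp
    rw [this, zero_mul]
  · have h2 : 1 ≤ w m x.1 := w_pos m _ h1
    have : w m x.2 < m + 1 := by
      have := w_add m x.1 x.2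
      rw [hxe] at this
      omega
    rw [hv x.2 this, mul_zero]

end ArAux2

open ArAux ArAux2

/-- **The Artin–Rees bound can be arbitrarily large.** Over `ℝ^n` (here `n = m+1 ≥ 1`) with
coordinates `x_1, …, x_n` of weights `1, …, n`, let `F` be the module of polynomial vector
fields generated by the monomial fields `x^d ∂/∂x_k` with `Σ_j weight(j)·d_j ≥ weight(k)`
(those preserving the weight filtration).  Then `x_1^n ∂/∂x_n` belongs to `F ∩ I^n·𝔛(ℝ^n)`
but not to `I·F`, where `I` is the ideal of polynomials vanishing at `0`. -/
theorem artin_rees_bound_large (m : ℕ) :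
    let n := m + 1
    let R := MvPolynomial (Fin n) ℝ
    let V := Fin n → MvPolynomial (Fin n) ℝ
    -- generators: monomial vector fields preserving the weight filtration
    let gens : Set V := {v | ∃ (k : Fin n) (d : Fin n →₀ ℕ),
      (k.val + 1) ≤ (∑ j : Fin n, (j.val + 1) * d j) ∧
      v = fun i => if i = k then monomial d (1 : ℝ) else 0}
    let F : Submodule R V := Submodule.span R gens
    -- the ideal of polynomials vanishing at the origin
    let I : Ideal R := RingHom.ker (constantCoeff : R →+* ℝ)
    -- the vector field `x_1^n ∂/∂x_n`
    let X₀ : V := fun i => if i = Fin.last m then (X 0) ^ n else 0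
    X₀ ∈ F ∧ X₀ ∈ (I ^ n • (⊤ : Submodule R V)) ∧ X₀ ∉ I • F := by
  intro n R V gens F I X₀
  have hXeq : X₀ = fun i => if i = Fin.last m then monomial (Finsupp.single (0 : Fin n) n) (1:ℝ) else 0 := by
    funext i
    simp only [X₀, X_pow_eq_monomial, Finsupp.smul_single, smul_eq_mul, mul_one]
  refine ⟨?_, ?_, ?_⟩
  · -- X₀ ∈ F
    apply Submodule.subset_span
    refine ⟨Fin.last m, Finsupp.single 0 n, ?_, hXeq⟩
    have h := w_single m
    rw [w] at h
    simpa only [Fin.val_last] using h.ge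
  · -- X₀ ∈ I ^ n • ⊤
    have hX0 : X (0 : Fin n) ∈ I := by
      simp [I, RingHom.mem_ker]
    have hpow : (X (0 : Fin n))^n ∈ I ^ n := Ideal.pow_mem_pow hX0 n
    have : X₀ = ((X (0 : Fin n))^n : R) • (fun i => if i = Fin.last m then (1:R) else 0) := by
      funext i
      simp [X₀, Pi.smul_apply, smul_eq_mul, mul_ite]
    rw [this]
    exact Submodule.smul_mem_smul hpow trivial
  · -- X₀ ∉ I • F
    intro hmem
    have h0 : coeff (Finsupp.single (0 : Fin n) n) (X₀ (Fin.last m)) = 0 := by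
      refine Submodule.smul_induction_on hmem ?_ ?_
      · intro r hr v hv
        refine smul_coeff_zero m r v ?_ (span_le_Wge m hv) _ ?_
        · exact hr
        · exact le_of_eq (w_single m)
      · intro x y hx hy
        have hadd : (x + y) (Fin.last m) = x (Fin.last m) + y (Fin.last m) := rfl
        rw [hadd, MvPolynomial.coeff_add, hx, hy, add_zero]
    rw [hXeq] at h0
    simp [MvPolynomial.coeff_monomial] at h0
end

section
/- Let g be a finite-dimensional Lie algebra over a field of characteristic zero such that the first and second Chevalley–Eilenberg cohomology groups H^1(g, V) and H^2(g, V) vanish for all finite-dimensional g-modules V (e.g. g semisimple). Let A be a Lie algebra, π: A → g a surjective Lie algebra morphism whose kernel r is a finite-dimensional solvable ideal. Then π admits a Lie algebra section g → A. -/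
/-!
A linear section `σ` of `π` fails to be a Lie map by its curvature
`(x, y) ↦ ⁅σ x, σ y⁆ - σ ⁅x, y⁆`, which takes values in `r = ker π`. If the curvature takes
values in the derived ideal `r⁽ⁿ⁾`, then `ad ∘ σ` makes `r⁽ⁿ⁾ / r⁽ⁿ⁺¹⁾` a `g`-module, on which
the curvature becomes a 2-cocycle. Writing it as the coboundary of some `φ` and replacing `σ` by
`σ - φ` moves the curvature into `r⁽ⁿ⁺¹⁾`, the only new term `⁅φ x, φ y⁆` lying in
`⁅r⁽ⁿ⁾, r⁽ⁿ⁾⁆`. As `r` is solvable, the curvature eventually vanishes.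
-/

universe u v

open LieAlgebra

def SecondCohomologyVanishes (K : Type v) [Field K] (g : Type u) [LieRing g] [LieAlgebra K g] :
    Prop :=
  ∀ (V : Type u) [AddCommGroup V] [Module K V] [LieRingModule g V]
      [LieModule K g V] [FiniteDimensional K V],
      ∀ ω : g →ₗ[K] g →ₗ[K] V, (∀ x : g, ω x x = 0) →
        (∀ x y z : g,
          ⁅x, ω y z⁆ - ⁅y, ω x z⁆ + ⁅z, ω x y⁆
            - ω ⁅x, y⁆ z + ω ⁅x, z⁆ y - ω ⁅y, z⁆ x = 0) →
        ∃ φ : g →ₗ[K] V, ∀ x y : g, ω x y = ⁅x, φ y⁆ - ⁅y, φ x⁆ - φ ⁅x, y⁆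

namespace LinearMap

variable {K : Type v} [CommRing K] {g : Type u} [LieRing g] [LieAlgebra K g]
  {A : Type*} [LieRing A] [LieAlgebra K A]

def lieCurvature (σ : g →ₗ[K] A) : g →ₗ[K] g →ₗ[K] A :=
  (LieModule.toEnd K A A : A →ₗ[K] Module.End K A).compl₁₂ σ σ
    - (LieModule.toEnd K g g : g →ₗ[K] Module.End K g).compr₂ σ

theorem lieCurvature_apply (σ : g →ₗ[K] A) (x y : g) :
    σ.lieCurvature x y = ⁅σ x, σ y⁆ - σ ⁅x, y⁆ := rfl

theorem lieCurvature_self (σ : g →ₗ[K] A) (x : g) : σ.lieCurvature x x = 0 := by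
  rw [lieCurvature_apply, lie_self, lie_self, map_zero, sub_zero]

theorem lieCurvature_cocycle (σ : g →ₗ[K] A) (x y z : g) :
    ⁅σ x, σ.lieCurvature y z⁆ - ⁅σ y, σ.lieCurvature x z⁆ + ⁅σ z, σ.lieCurvature x y⁆
      - σ.lieCurvature ⁅x, y⁆ z + σ.lieCurvature ⁅x, z⁆ y - σ.lieCurvature ⁅y, z⁆ x = 0 := by
  simp only [lieCurvature_apply, lie_sub]
  rw [leibniz_lie (σ x) (σ y) (σ z), ← lie_skew (σ z) ⁅σ x, σ y⁆,
    ← lie_skew (σ x) (σ ⁅y, z⁆), ← lie_skew (σ y) (σ ⁅x, z⁆), ← lie_skew (σ z) (σ ⁅x, y⁆),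
    ← lie_skew (⁅x, z⁆ : g) y, ← lie_skew (⁅y, z⁆ : g) x, leibniz_lie x y z]
  simp only [map_neg, map_add]
  abel

theorem lieCurvature_sub (σ ψ : g →ₗ[K] A) (x y : g) :
    (σ - ψ).lieCurvature x y =
      σ.lieCurvature x y - (⁅σ x, ψ y⁆ - ⁅σ y, ψ x⁆ - ψ ⁅x, y⁆) + ⁅ψ x, ψ y⁆ := by
  simp only [lieCurvature_apply, sub_apply, lie_sub, sub_lie, ← lie_skew (ψ x) (σ y)]
  abel

theorem lieCurvature_mem_ker (π : A →ₗ⁅K⁆ g) (σ : g →ₗ[K] A) (hσ : ∀ x, π (σ x) = x) (x y : g) :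
    σ.lieCurvature x y ∈ π.ker := by
  rw [LieHom.mem_ker, lieCurvature_apply, map_sub, LieHom.map_lie, hσ, hσ, hσ, sub_self]

end LinearMap

attribute [local instance 100] LieRing.ofAssociativeRing

namespace LieIdeal

section CommRing

variable {K : Type v} [CommRing K] {A : Type*} [LieRing A] [LieAlgebra K A]

abbrev Subquotient (I J : LieIdeal K A) : Type _ :=
  I ⧸ LieSubmodule.comap (LieSubmodule.incl I) J

variable {I J : LieIdeal K A}

theorem toEnd_subquotient_eq_zero (hIJ : ⁅I, I⁆ ≤ J) {a : A} (ha : a ∈ I) :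
    LieModule.toEnd K A (I.Subquotient J) a = 0 := by
  ext v
  obtain ⟨v, rfl⟩ := LieSubmodule.Quotient.surjective_mk' _ v
  rw [LieModule.toEnd_apply_apply, ← LieModuleHom.map_lie, LinearMap.zero_apply]
  exact (LieSubmodule.Quotient.mk_eq_zero _).mpr (hIJ (LieSubmodule.lie_mem_lie ha v.2))

variable {g : Type u} [LieRing g] [LieAlgebra K g]

def subquotientRep (hIJ : ⁅I, I⁆ ≤ J) (σ : g →ₗ[K] A) (hσ : ∀ x y, σ.lieCurvature x y ∈ I) :
    g →ₗ⁅K⁆ Module.End K (I.Subquotient J) where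
  toLinearMap := (LieModule.toEnd K A (I.Subquotient J)).toLinearMap ∘ₗ σ
  map_lie' {x y} := by
    have h := toEnd_subquotient_eq_zero hIJ (hσ x y)
    rw [σ.lieCurvature_apply, map_sub, LieHom.map_lie, sub_eq_zero] at h
    exact h.symm

end CommRing

section Field

variable {K : Type v} [Field K] {A : Type u} [LieRing A] [LieAlgebra K A] {I J : LieIdeal K A}
  {g : Type u} [LieRing g] [LieAlgebra K g]

theorem exists_lieCurvature_sub_coboundary_mem (h2 : SecondCohomologyVanishes K g)
    [FiniteDimensional K I] (hIJ : ⁅I, I⁆ ≤ J) (σ : g →ₗ[K] A)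
    (hσ : ∀ x y, σ.lieCurvature x y ∈ I) :
    ∃ ψ : g →ₗ[K] A, (∀ x, ψ x ∈ I) ∧
      ∀ x y, σ.lieCurvature x y - (⁅σ x, ψ y⁆ - ⁅σ y, ψ x⁆ - ψ ⁅x, y⁆) ∈ J := by
  let := LieRingModule.compLieHom (I.Subquotient J) (subquotientRep hIJ σ hσ)
  have := LieModule.compLieHom (R := K) (I.Subquotient J) (subquotientRep hIJ σ hσ)
  let Q := LieSubmodule.Quotient.mk' (LieSubmodule.comap (LieSubmodule.incl I) J)
  have hQ_lie : ∀ (x : g) (v : I), ⁅x, Q v⁆ = Q ⁅σ x, v⁆ := fun x v => (Q.map_lie _ _).symm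
  have hQ_eq_zero : ∀ v : I, Q v = 0 ↔ (v : A) ∈ J := fun v =>
    LieSubmodule.Quotient.mk_eq_zero _
  let ω : g →ₗ[K] g →ₗ[K] I.Subquotient J :=
    LinearMap.mk₂ K (fun x y => Q ⟨σ.lieCurvature x y, hσ x y⟩)
      (fun _ _ _ => by rw [← map_add]; congr 1; ext; simp)
      (fun _ _ _ => by rw [← map_smul]; congr 1; ext; simp)
      (fun _ _ _ => by rw [← map_add]; congr 1; ext; simp)
      (fun _ _ _ => by rw [← map_smul]; congr 1; ext; simp)
  have hω (x y : g) : ω x y = Q ⟨σ.lieCurvature x y, hσ x y⟩ := rfl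
  have hω_self (x : g) : ω x x = 0 := by
    rw [hω, hQ_eq_zero]
    simpa only [σ.lieCurvature_self] using J.zero_mem
  have hω_cocycle (x y z : g) : ⁅x, ω y z⁆ - ⁅y, ω x z⁆ + ⁅z, ω x y⁆
      - ω ⁅x, y⁆ z + ω ⁅x, z⁆ y - ω ⁅y, z⁆ x = 0 := by
    simp only [hω, hQ_lie, ← map_sub, ← map_add, hQ_eq_zero]
    convert J.zero_mem using 1
    push_cast
    exact σ.lieCurvature_cocycle x y z
  obtain ⟨φ, hφ⟩ := h2 _ ω hω_self hω_cocycle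
  obtain ⟨lift, hlift⟩ := (Q : I →ₗ[K] I.Subquotient J).exists_rightInverse_of_surjective
    (LinearMap.range_eq_top.mpr (LieSubmodule.Quotient.surjective_mk' _))
  let φ' := lift ∘ₗ φ
  have hQφ' (x : g) : Q (φ' x) = φ x := LinearMap.congr_fun hlift (φ x)
  refine ⟨(LieSubmodule.toSubmodule I).subtype ∘ₗ φ', fun x => (φ' x).2, fun x y => ?_⟩
  have hw : Q (⟨σ.lieCurvature x y, hσ x y⟩ - (⁅σ x, φ' y⁆ - ⁅σ y, φ' x⁆ - φ' ⁅x, y⁆)) = 0 := by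
    rw [map_sub, ← hω, hφ, map_sub, map_sub, ← hQ_lie, ← hQ_lie, hQφ', hQφ', hQφ', sub_self]
  rw [hQ_eq_zero] at hw
  convert hw using 1
  push_cast
  rfl

theorem exists_lieCurvature_sub_mem (h2 : SecondCohomologyVanishes K g) [FiniteDimensional K I]
    (hIJ : ⁅I, I⁆ ≤ J) (σ : g →ₗ[K] A) (hσ : ∀ x y, σ.lieCurvature x y ∈ I) :
    ∃ ψ : g →ₗ[K] A, (∀ x, ψ x ∈ I) ∧ ∀ x y, (σ - ψ).lieCurvature x y ∈ J := by
  obtain ⟨ψ, hψ, hcob⟩ := exists_lieCurvature_sub_coboundary_mem h2 hIJ σ hσ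
  refine ⟨ψ, hψ, fun x y => ?_⟩
  rw [σ.lieCurvature_sub ψ x y]
  exact J.add_mem (hcob x y) (hIJ (LieSubmodule.lie_mem_lie (hψ x) (hψ y)))

end Field

end LieIdeal

theorem LieHom.exists_section_lieCurvature_mem_derivedSeriesOfIdeal {K : Type v} [Field K]
    {g : Type u} [LieRing g] [LieAlgebra K g] (h2 : SecondCohomologyVanishes K g)
    {A : Type u} [LieRing A] [LieAlgebra K A] (π : A →ₗ⁅K⁆ g) (hπ : Function.Surjective π)
    [FiniteDimensional K π.ker] (n : ℕ) :
    ∃ σ : g →ₗ[K] A, (∀ x, π (σ x) = x) ∧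
      ∀ x y, σ.lieCurvature x y ∈ derivedSeriesOfIdeal K A n π.ker := by
  induction n with
  | zero =>
    obtain ⟨σ, hσ⟩ := (π : A →ₗ[K] g).exists_rightInverse_of_surjective
      (LinearMap.range_eq_top.mpr hπ)
    have hσ' (x : g) : π (σ x) = x := LinearMap.congr_fun hσ x
    exact ⟨σ, hσ', σ.lieCurvature_mem_ker π hσ'⟩
  | succ n ih =>
    obtain ⟨σ, hσ, hcurv⟩ := ih
    have hI := derivedSeriesOfIdeal_le_self π.ker n
    have : FiniteDimensional K (derivedSeriesOfIdeal K A n π.ker) :=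
      Submodule.finiteDimensional_of_le hI
    obtain ⟨ψ, hψ, hcurv'⟩ := LieIdeal.exists_lieCurvature_sub_mem h2
      (derivedSeriesOfIdeal_succ K A π.ker n).ge σ hcurv
    refine ⟨σ - ψ, fun x => ?_, hcurv'⟩
    rw [LinearMap.sub_apply, map_sub, hσ, LieHom.mem_ker.mp (hI (hψ x)), sub_zero]

theorem levi_malcev_of_whitehead_general
    {K : Type v} [Field K]
    {g : Type u} [LieRing g] [LieAlgebra K g]
    (h2 : ∀ (V : Type u) [AddCommGroup V] [Module K V] [LieRingModule g V]
      [LieModule K g V] [FiniteDimensional K V],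
      ∀ ω : g →ₗ[K] g →ₗ[K] V, (∀ x : g, ω x x = 0) →
        (∀ x y z : g,
          ⁅x, ω y z⁆ - ⁅y, ω x z⁆ + ⁅z, ω x y⁆
            - ω ⁅x, y⁆ z + ω ⁅x, z⁆ y - ω ⁅y, z⁆ x = 0) →
        ∃ φ : g →ₗ[K] V, ∀ x y : g, ω x y = ⁅x, φ y⁆ - ⁅y, φ x⁆ - φ ⁅x, y⁆)
    {A : Type u} [LieRing A] [LieAlgebra K A]
    (π : A →ₗ⁅K⁆ g) (hsurj : Function.Surjective π)
    (hsolv : LieAlgebra.IsSolvable ↥π.ker)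
    (hfin : FiniteDimensional K ↥π.ker) :
    ∃ s : g →ₗ⁅K⁆ A, ∀ ξ : g, π (s ξ) = ξ := by
  obtain ⟨n, hn⟩ := (isSolvable_iff K π.ker).mp hsolv
  obtain ⟨σ, hσ, hcurv⟩ := π.exists_section_lieCurvature_mem_derivedSeriesOfIdeal h2 hsurj n
  rw [(LieIdeal.derivedSeries_eq_bot_iff π.ker n).mp hn] at hcurv
  refine ⟨{ σ with map_lie' := fun {x y} => ?_ }, hσ⟩
  have hxy := hcurv x y
  rwa [LieSubmodule.mem_bot, σ.lieCurvature_apply, sub_eq_zero, eq_comm] at hxy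

/-- **Levi–Malcev splitting.** Let `g` be a finite-dimensional Lie algebra over a field `K` of
characteristic zero such that the first and second Chevalley–Eilenberg cohomology groups
`H¹(g,V)` and `H²(g,V)` vanish for all finite-dimensional `g`-modules `V` (e.g. `g`
semisimple): every 1-cocycle is inner and every 2-cocycle is a coboundary.  Let `A` be a Lie
algebra and `π : A → g` a surjective Lie algebra morphism whose kernel is a finite-dimensional
solvable ideal.  Then `π` admits a Lie algebra section `g → A`. -/
theorem levi_malcev_of_whitehead
    {K : Type v} [Field K] [CharZero K]
    {g : Type u} [LieRing g] [LieAlgebra K g] [FiniteDimensional K g]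
    (h1 : ∀ (V : Type u) [AddCommGroup V] [Module K V] [LieRingModule g V]
      [LieModule K g V] [FiniteDimensional K V],
      ∀ f : g →ₗ[K] V, (∀ x y : g, f ⁅x, y⁆ = ⁅x, f y⁆ - ⁅y, f x⁆) →
        ∃ v : V, ∀ x : g, f x = ⁅x, v⁆)
    (h2 : ∀ (V : Type u) [AddCommGroup V] [Module K V] [LieRingModule g V]
      [LieModule K g V] [FiniteDimensional K V],
      ∀ ω : g →ₗ[K] g →ₗ[K] V, (∀ x : g, ω x x = 0) →
        (∀ x y z : g,
          ⁅x, ω y z⁆ - ⁅y, ω x z⁆ + ⁅z, ω x y⁆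
            - ω ⁅x, y⁆ z + ω ⁅x, z⁆ y - ω ⁅y, z⁆ x = 0) →
        ∃ φ : g →ₗ[K] V, ∀ x y : g, ω x y = ⁅x, φ y⁆ - ⁅y, φ x⁆ - φ ⁅x, y⁆)
    {A : Type u} [LieRing A] [LieAlgebra K A]
    (π : A →ₗ⁅K⁆ g) (hsurj : Function.Surjective π)
    (hsolv : LieAlgebra.IsSolvable ↥π.ker)
    (hfin : FiniteDimensional K ↥π.ker) :
    ∃ s : g →ₗ⁅K⁆ A, ∀ ξ : g, π (s ξ) = ξ :=
  levi_malcev_of_whitehead_general h2 π hsurj hsolv hfin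
end

section
/- Let L be a manifold, α, β closed 1-forms on L, and a < b natural numbers with a ≥ 2, c = a + b − 1. On M = L × ℝ with coordinate t, define ψ(u) = u + α(u)·t^a ∂/∂t + β(u)·t^b ∂/∂t for vector fields u on L. Then for all vector fields u, v on L: [t^c ∂/∂t, ψ(u)] = ((c−a)·α(u)·t^{a−1} + (c−b)·β(u)·t^{b−1})·t^c ∂/∂t, and ψ([u,v]) − [ψ(u), ψ(v)] = (b−a)·(α(u)β(v) − β(u)α(v))·t^c ∂/∂t. -/
variable {E : Type*} [NormedAddCommGroup E] [NormedSpace ℝ E]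

/-- Lie bracket of vector fields on `E` (convention `[X,Y] = DX·Y − DY·X`). -/
noncomputable def lbE (u v : E → E) : E → E :=
  fun x => fderiv ℝ u x (v x) - fderiv ℝ v x (u x)

/-- Lie bracket of vector fields on `M = E × ℝ` (same convention). -/
noncomputable def lbM (X Y : E × ℝ → E × ℝ) : E × ℝ → E × ℝ :=
  fun p => fderiv ℝ X p (Y p) - fderiv ℝ Y p (X p)

lemma hasFDerivAt_psi_aux (a b : ℕ) (α β : E → (E →L[ℝ] ℝ))
    (hα : ContDiff ℝ (⊤ : ℕ∞) α) (hβ : ContDiff ℝ (⊤ : ℕ∞) β)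
    (w : E → E) (hw : ContDiff ℝ (⊤ : ℕ∞) w) (p : E × ℝ) :
    ∃ D : (E × ℝ) →L[ℝ] (E × ℝ),
      HasFDerivAt (fun p : E × ℝ =>
        (w p.1, α p.1 (w p.1) * p.2 ^ a + β p.1 (w p.1) * p.2 ^ b)) D p ∧
      ∀ q : E × ℝ, D q = (fderiv ℝ w p.1 q.1,
        α p.1 (w p.1) * (↑a * p.2 ^ (a-1) * q.2)
        + p.2 ^ a * (α p.1 (fderiv ℝ w p.1 q.1) + fderiv ℝ α p.1 q.1 (w p.1))
        + (β p.1 (w p.1) * (↑b * p.2 ^ (b-1) * q.2)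
        + p.2 ^ b * (β p.1 (fderiv ℝ w p.1 q.1) + fderiv ℝ β p.1 q.1 (w p.1)))) := by
  have hw' := (hw.differentiable (by simp) p.1).hasFDerivAt
  have h1 : HasFDerivAt (fun p : E × ℝ => w p.1)
      ((fderiv ℝ w p.1).comp (ContinuousLinearMap.fst ℝ E ℝ)) p :=
    hw'.comp p hasFDerivAt_fst
  have hga : HasFDerivAt (fun p : E × ℝ => α p.1 (w p.1))
      (((α p.1).comp (fderiv ℝ w p.1) + (fderiv ℝ α p.1).flip (w p.1)).comp
        (ContinuousLinearMap.fst ℝ E ℝ)) p :=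
    (((hα.differentiable (by simp) p.1).hasFDerivAt).clm_apply hw').comp p hasFDerivAt_fst
  have hgb : HasFDerivAt (fun p : E × ℝ => β p.1 (w p.1))
      (((β p.1).comp (fderiv ℝ w p.1) + (fderiv ℝ β p.1).flip (w p.1)).comp
        (ContinuousLinearMap.fst ℝ E ℝ)) p :=
    (((hβ.differentiable (by simp) p.1).hasFDerivAt).clm_apply hw').comp p hasFDerivAt_fst
  have hpa := (hasDerivAt_pow a p.2).comp_hasFDerivAt p
    (hasFDerivAt_snd (𝕜 := ℝ) (E := E) (F := ℝ) (p := p))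
  have hpb := (hasDerivAt_pow b p.2).comp_hasFDerivAt p
    (hasFDerivAt_snd (𝕜 := ℝ) (E := E) (F := ℝ) (p := p))
  refine ⟨_, HasFDerivAt.prodMk h1 ((hga.mul hpa).add (hgb.mul hpb)), fun q => ?_⟩
  simp [ContinuousLinearMap.prod_apply, ContinuousLinearMap.add_apply,
    ContinuousLinearMap.comp_apply, ContinuousLinearMap.smul_apply,
    ContinuousLinearMap.flip_apply, smul_eq_mul]
  ring

/-- **The bracket relations of Example `transquad`.**  Let `L` be a manifold (modelled here on
a real normed space `E`), `α, β` closed 1-forms on `L`, and `a < b` natural numbers with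
`a ≥ 2`, `c = a + b − 1`.  On `M = L × ℝ` with coordinate `t`, let
`ψ(u) = u + α(u)·t^a ∂/∂t + β(u)·t^b ∂/∂t` for vector fields `u` on `L`, and `T = t^c ∂/∂t`.
Then for all vector fields `u, v` on `L`:
`[T, ψ(u)] = ((c−a)·α(u)·t^(a−1) + (c−b)·β(u)·t^(b−1))·t^c ∂/∂t` and
`ψ([u,v]) − [ψ(u), ψ(v)] = (b−a)·(α(u)β(v) − β(u)α(v))·t^c ∂/∂t`. -/
theorem transversally_quadratic_example_brackets
    (a b c : ℕ) (ha : 2 ≤ a) (hab : a < b) (hc : c = a + b - 1)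
    (α β : E → (E →L[ℝ] ℝ)) (hα : ContDiff ℝ (⊤ : ℕ∞) α) (hβ : ContDiff ℝ (⊤ : ℕ∞) β)
    (hαclosed : ∀ (x : E) (w₁ w₂ : E), fderiv ℝ α x w₁ w₂ = fderiv ℝ α x w₂ w₁)
    (hβclosed : ∀ (x : E) (w₁ w₂ : E), fderiv ℝ β x w₁ w₂ = fderiv ℝ β x w₂ w₁)
    (u v : E → E) (hu : ContDiff ℝ (⊤ : ℕ∞) u) (hv : ContDiff ℝ (⊤ : ℕ∞) v) :
    let ψ : (E → E) → (E × ℝ → E × ℝ) := fun w p =>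
      (w p.1, α p.1 (w p.1) * p.2 ^ a + β p.1 (w p.1) * p.2 ^ b)
    let T : E × ℝ → E × ℝ := fun p => ((0 : E), p.2 ^ c)
    (∀ p : E × ℝ, lbM T (ψ u) p =
      ((0 : E), (((c : ℝ) - (a : ℝ)) * α p.1 (u p.1) * p.2 ^ (a - 1)
        + ((c : ℝ) - (b : ℝ)) * β p.1 (u p.1) * p.2 ^ (b - 1)) * p.2 ^ c)) ∧
    (∀ p : E × ℝ, ψ (lbE u v) p - lbM (ψ u) (ψ v) p =
      ((0 : E), ((b : ℝ) - (a : ℝ))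
        * (α p.1 (u p.1) * β p.1 (v p.1) - β p.1 (u p.1) * α p.1 (v p.1)) * p.2 ^ c)) := by
  intro ψ T
  obtain ⟨A, rfl⟩ : ∃ A, a = A + 1 := ⟨a - 1, by omega⟩
  obtain ⟨B, rfl⟩ : ∃ B, b = B + 1 := ⟨b - 1, by omega⟩
  have hc' : c = A + B + 1 := by omega
  subst hc'
  constructor
  · intro p
    have hT : HasFDerivAt T
        ((0 : (E × ℝ) →L[ℝ] E).prod
          ((↑(A + B + 1) * p.2 ^ (A + B + 1 - 1)) • ContinuousLinearMap.snd ℝ E ℝ)) p :=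
      HasFDerivAt.prodMk (hasFDerivAt_const (0 : E) p)
        ((hasDerivAt_pow (A + B + 1) p.2).comp_hasFDerivAt p hasFDerivAt_snd)
    obtain ⟨Du, hDu, hDuq⟩ := hasFDerivAt_psi_aux (A + 1) (B + 1) α β hα hβ u hu p
    simp only [lbM, ψ, T]
    rw [hT.fderiv, hDu.fderiv, hDuq]
    simp [ContinuousLinearMap.prod_apply, ContinuousLinearMap.smul_apply, smul_eq_mul]
    ring
  · intro p
    obtain ⟨Du, hDu, hDuq⟩ := hasFDerivAt_psi_aux (A + 1) (B + 1) α β hα hβ u hu p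
    obtain ⟨Dv, hDv, hDvq⟩ := hasFDerivAt_psi_aux (A + 1) (B + 1) α β hα hβ v hv p
    simp only [lbM, lbE, ψ]
    rw [hDu.fderiv, hDv.fderiv, hDuq, hDvq]
    simp only [map_sub, Nat.add_sub_cancel]
    rw [hαclosed p.1 (v p.1) (u p.1), hβclosed p.1 (v p.1) (u p.1)]
    refine Prod.ext (by simp) ?_
    simp only [Prod.snd_sub]
    push_cast
    ring
end
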